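/- Let R be a commutative ring. For every ring term t over R there exists a standard ring term u over R such that t and u are f-equivalent. -/

import Mathlib

/-- Ring terms over a commutative ring `R`. -/
inductive RingTerm (R : Type*) where
  | X : ℕ → RingTerm R
  | C : R → RingTerm R
  | zero : RingTerm R
  | one : RingTerm R
  | add : RingTerm R → RingTerm R → RingTerm R
  | mul : RingTerm R → RingTerm R → RingTerm R

namespace RingTerm

variable {R : Type*} [CommRing R]

/-- The evaluation map `Ψ` into multivariate polynomials. -/
noncomputable def psi : RingTerm R → MvPolynomial ℕ R
  | X i => MvPolynomial.X i
  | C r => MvPolynomial.C r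
  | zero => 0
  | one => 1
  | add t u => psi t + psi u
  | mul t u => psi t * psi u

/-- One-step elementary transformation: the twelve rules ET−1 … ET10,
closed under the term-forming operations (compatible closure). -/
inductive Step : RingTerm R → RingTerm R → Prop where
  | etm1 : Step zero (C 0)
  | et0 : Step one (C 1)
  | et1 (r s : R) : Step (add (C r) (C s)) (C (r + s))
  | et2 (r s : R) : Step (mul (C r) (C s)) (C (r * s))
  | et3 (u : RingTerm R) : Step (add zero u) u
  | et4 (u : RingTerm R) : Step (mul one u) u
  | et5 (u u' : RingTerm R) : Step (add u u') (add u' u)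
  | et6 (u u' : RingTerm R) : Step (mul u u') (mul u' u)
  | et7 (u u' u'' : RingTerm R) : Step (add u (add u' u'')) (add (add u u') u'')
  | et8 (u u' u'' : RingTerm R) : Step (mul u (mul u' u'')) (mul (mul u u') u'')
  | et9 (u u' u'' : RingTerm R) :
      Step (mul u (add u' u'')) (add (mul u u') (mul u u''))
  | et10 (u : RingTerm R) : Step (mul zero u) zero
  | addLeft {t t' : RingTerm R} (u : RingTerm R) :
      Step t t' → Step (add t u) (add t' u)
  | addRight (u : RingTerm R) {t t' : RingTerm R} :
      Step t t' → Step (add u t) (add u t')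
  | mulLeft {t t' : RingTerm R} (u : RingTerm R) :
      Step t t' → Step (mul t u) (mul t' u)
  | mulRight (u : RingTerm R) {t t' : RingTerm R} :
      Step t t' → Step (mul u t) (mul u t')

/-- f-equivalence: the equivalence closure of the one-step transformation. -/
def FEq (t u : RingTerm R) : Prop := Relation.EqvGen Step t u

end RingTerm

namespace RingTerm

variable {R : Type*}

/-- The number of occurrences of the variable `X i` in a term. -/
def varCount : RingTerm R → ℕ → ℕ
  | X j, i => if j = i then 1 else 0
  | C _, _ => 0
  | zero, _ => 0
  | one, _ => 0
  | add t u, i => varCount t i + varCount u i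
  | mul t u, i => varCount t i + varCount u i

/-- A term built only from variables and the binary symbol `·`. -/
def MulOnly : RingTerm R → Prop
  | X _ => True
  | mul t u => MulOnly t ∧ MulOnly u
  | _ => False

/-- An `m̄`-monomial: a term built only from variables and `·` in which each
variable `X i` occurs exactly `m̄ i` times; for `m̄ = 0` it is the term `1`. -/
def IsMonomial (m : ℕ →₀ ℕ) (t : RingTerm R) : Prop :=
  (m = 0 ∧ t = one) ∨ (MulOnly t ∧ ∀ i, varCount t i = m i)

/-- Nonempty iterated sums: `IsSumOfPos l s` holds iff `s` is obtained from a
term built only from variables (each occurring exactly once) and `+` by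
substituting the terms of the multiset `l` for the variables. -/
inductive IsSumOfPos : Multiset (RingTerm R) → RingTerm R → Prop where
  | single (t : RingTerm R) : IsSumOfPos {t} t
  | add {l l' : Multiset (RingTerm R)} {s s' : RingTerm R} :
      IsSumOfPos l s → IsSumOfPos l' s' → IsSumOfPos (l + l') (add s s')

/-- `s` is a sum of the terms in the multiset `l`; for `l = 0` the unique sum
is the term `0`. -/
def IsSumOf (l : Multiset (RingTerm R)) (s : RingTerm R) : Prop :=
  (l = 0 ∧ s = zero) ∨ IsSumOfPos l s

end RingTerm

namespace RingTerm

/-- `t` is a standard ring term with carrier `p`: `t` is a sum of terms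
`C (r i) · μ i`, `i = 1, …, N`, where the `r i` are nonzero and the `μ i` are
`m̄ i`-monomials with pairwise distinct exponent vectors, and
`p = Σ_i monomial (m̄ i) (r i)`. -/
noncomputable def IsStandardWithCarrier {R : Type*} [CommRing R]
    (t : RingTerm R) (p : MvPolynomial ℕ R) : Prop :=
  ∃ (N : ℕ) (r : Fin N → R) (m : Fin N → (ℕ →₀ ℕ)) (μ : Fin N → RingTerm R),
    (∀ i, r i ≠ 0) ∧ Function.Injective m ∧
    (∀ i, IsMonomial (m i) (μ i)) ∧
    IsSumOf (Multiset.map (fun i => mul (C (r i)) (μ i)) Finset.univ.val) t ∧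
    p = ∑ i : Fin N, MvPolynomial.monomial (m i) (r i)

end RingTerm

/-! The rules ET−1 … ET10 say precisely that f-equivalence classes of terms form a commutative
semiring into which `C` is a ring hom. Evaluating polynomials in this semiring therefore sends
`psi t` to the class of `t`, so terms with the same polynomial are f-equivalent. It remains to
build, from the support of `psi t`, a standard term whose carrier, and hence polynomial, is
`psi t`. -/

namespace RingTerm

section Completeness

variable {R : Type*} [CommRing R]

variable (R) in
def FClass : Type _ := Quot (Step (R := R))

namespace FClass

def mk : RingTerm R → FClass R := Quot.mk _

theorem mk_eq_mk_of_step {t u : RingTerm R} (h : Step t u) : mk t = mk u := Quot.sound h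

instance : Zero (FClass R) := ⟨mk zero⟩

instance : One (FClass R) := ⟨mk one⟩

instance : Add (FClass R) :=
  ⟨Quot.map₂ add (fun _ _ _ => Step.addRight _) (fun _ _ _ => Step.addLeft _)⟩

instance : Mul (FClass R) :=
  ⟨Quot.map₂ mul (fun _ _ _ => Step.mulRight _) (fun _ _ _ => Step.mulLeft _)⟩

theorem mk_add (t u : RingTerm R) : mk (add t u) = mk t + mk u := rfl

theorem mk_mul (t u : RingTerm R) : mk (mul t u) = mk t * mk u := rfl

instance : CommSemiring (FClass R) where
  add_assoc := by rintro ⟨a⟩ ⟨b⟩ ⟨c⟩; exact (mk_eq_mk_of_step (.et7 a b c)).symm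
  zero_add := by rintro ⟨a⟩; exact mk_eq_mk_of_step (.et3 a)
  add_zero := by
    rintro ⟨a⟩; exact (mk_eq_mk_of_step (.et5 a zero)).trans (mk_eq_mk_of_step (.et3 a))
  add_comm := by rintro ⟨a⟩ ⟨b⟩; exact mk_eq_mk_of_step (.et5 a b)
  mul_assoc := by rintro ⟨a⟩ ⟨b⟩ ⟨c⟩; exact (mk_eq_mk_of_step (.et8 a b c)).symm
  one_mul := by rintro ⟨a⟩; exact mk_eq_mk_of_step (.et4 a)
  mul_one := by
    rintro ⟨a⟩; exact (mk_eq_mk_of_step (.et6 a one)).trans (mk_eq_mk_of_step (.et4 a))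
  zero_mul := by rintro ⟨a⟩; exact mk_eq_mk_of_step (.et10 a)
  mul_zero := by
    rintro ⟨a⟩; exact (mk_eq_mk_of_step (.et6 a zero)).trans (mk_eq_mk_of_step (.et10 a))
  mul_comm := by rintro ⟨a⟩ ⟨b⟩; exact mk_eq_mk_of_step (.et6 a b)
  left_distrib := by rintro ⟨a⟩ ⟨b⟩ ⟨c⟩; exact mk_eq_mk_of_step (.et9 a b c)
  right_distrib := by
    rintro ⟨a⟩ ⟨b⟩ ⟨c⟩
    calc mk (mul (add a b) c) = mk (add (mul c a) (mul c b)) :=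
          (mk_eq_mk_of_step (.et6 _ _)).trans (mk_eq_mk_of_step (.et9 _ _ _))
      _ = mk (add (mul a c) (mul b c)) := by
          rw [mk_add, mk_add, mk_eq_mk_of_step (.et6 c a), mk_eq_mk_of_step (.et6 c b)]
  nsmul := nsmulRec

def const : R →+* FClass R where
  toFun r := mk (C r)
  map_one' := (mk_eq_mk_of_step .et0).symm
  map_mul' r s := (mk_eq_mk_of_step (.et2 r s)).symm
  map_zero' := (mk_eq_mk_of_step .etm1).symm
  map_add' r s := (mk_eq_mk_of_step (.et1 r s)).symm

noncomputable def eval : MvPolynomial ℕ R →+* FClass R :=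
  MvPolynomial.eval₂Hom const fun i => mk (X i)

theorem eval_psi (t : RingTerm R) : eval (psi t) = mk t := by
  induction t with
  | X i => exact MvPolynomial.eval₂_X _ _ i
  | C r => exact MvPolynomial.eval₂_C _ _ r
  | zero => exact map_zero eval
  | one => exact map_one eval
  | add t u ht hu => rw [psi, map_add, ht, hu, mk_add]
  | mul t u ht hu => rw [psi, map_mul, ht, hu, mk_mul]

end FClass

theorem feq_of_psi_eq {t u : RingTerm R} (h : psi t = psi u) : FEq t u :=
  Quot.eqvGen_exact (by rw [← FClass.eval_psi t, h, FClass.eval_psi] : FClass.mk t = FClass.mk u)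

end Completeness

section StandardTerms

variable {R : Type*}

theorem exists_isSumOf (l : Multiset (RingTerm R)) : ∃ s, IsSumOf l s := by
  induction l using Multiset.induction_on with
  | empty => exact ⟨zero, .inl ⟨rfl, rfl⟩⟩
  | cons a l ih =>
    obtain ⟨s, ⟨rfl, rfl⟩ | hs⟩ := ih
    · exact ⟨a, .inr (.single a)⟩
    · refine ⟨add a s, .inr ?_⟩
      rw [← Multiset.singleton_add]
      exact .add (.single a) hs

theorem exists_mulOnly_varCount_eq_count {s : Multiset ℕ} (hs : s ≠ 0) :
    ∃ μ : RingTerm R, MulOnly μ ∧ ∀ i, varCount μ i = s.count i := by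
  induction s using Multiset.induction_on with
  | empty => exact absurd rfl hs
  | cons a s ih =>
    rcases eq_or_ne s 0 with rfl | hs'
    · refine ⟨X a, trivial, fun i => ?_⟩
      simp [varCount, Multiset.count_singleton, eq_comm]
    · obtain ⟨μ, hμ, hcount⟩ := ih hs'
      refine ⟨mul (X a) μ, ⟨trivial, hμ⟩, fun i => ?_⟩
      simp [varCount, hcount, Multiset.count_cons, eq_comm, add_comm]

theorem exists_isMonomial (m : ℕ →₀ ℕ) : ∃ μ : RingTerm R, IsMonomial m μ := by
  rcases eq_or_ne m 0 with rfl | hm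
  · exact ⟨one, .inl ⟨rfl, rfl⟩⟩
  · obtain ⟨μ, hμ, hcount⟩ :=
      exists_mulOnly_varCount_eq_count (R := R) (s := Finsupp.toMultiset m)
        fun h => hm <| by rw [← Finsupp.toMultiset_toFinsupp m, h, Multiset.toFinsupp_zero]
    exact ⟨μ, .inr ⟨hμ, fun i => by rw [hcount, Finsupp.count_toMultiset]⟩⟩

variable [CommRing R]

theorem IsSumOf.psi_eq {l : Multiset (RingTerm R)} {s : RingTerm R} (h : IsSumOf l s) :
    psi s = (l.map psi).sum := by
  obtain ⟨rfl, rfl⟩ | h := h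
  · rfl
  induction h with
  | single t => simp
  | add _ _ ht hu => rw [psi, ht, hu, Multiset.map_add, Multiset.sum_add]

theorem MulOnly.exists_psi_eq_monomial {μ : RingTerm R} (h : MulOnly μ) :
    ∃ m : ℕ →₀ ℕ, psi μ = MvPolynomial.monomial m 1 ∧ ∀ i, varCount μ i = m i := by
  induction μ with
  | X j => exact ⟨Finsupp.single j 1, rfl, fun i => by simp [varCount, Finsupp.single_apply]⟩
  | mul t u ht hu =>
    obtain ⟨m, hm, hcm⟩ := ht h.1
    obtain ⟨n, hn, hcn⟩ := hu h.2
    refine ⟨m + n, ?_, fun i => by simp [varCount, hcm, hcn]⟩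
    rw [psi, hm, hn, MvPolynomial.monomial_mul, mul_one]
  | _ => exact h.elim

theorem IsMonomial.psi_eq {m : ℕ →₀ ℕ} {μ : RingTerm R} (h : IsMonomial m μ) :
    psi μ = MvPolynomial.monomial m 1 := by
  obtain ⟨rfl, rfl⟩ | ⟨hμ, hcount⟩ := h
  · exact MvPolynomial.one_def
  · obtain ⟨n, hn, hcn⟩ := hμ.exists_psi_eq_monomial
    obtain rfl : m = n := Finsupp.ext fun i => (hcount i).symm.trans (hcn i)
    exact hn

theorem IsStandardWithCarrier.psi_eq {u : RingTerm R} {p : MvPolynomial ℕ R}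
    (h : IsStandardWithCarrier u p) : psi u = p := by
  obtain ⟨N, r, m, μ, -, -, hμ, hu, rfl⟩ := h
  rw [hu.psi_eq, Multiset.map_map]
  refine Finset.sum_congr rfl fun i _ => ?_
  rw [Function.comp_apply, psi, psi, (hμ i).psi_eq, MvPolynomial.C_mul_monomial, mul_one]

theorem exists_isStandardWithCarrier (p : MvPolynomial ℕ R) :
    ∃ u, IsStandardWithCarrier u p := by
  let e := p.support.equivFin.symm
  choose μ hμ using fun m : ℕ →₀ ℕ => exists_isMonomial (R := R) m
  obtain ⟨u, hu⟩ := exists_isSumOf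
    (Finset.univ.val.map fun i => mul (C (p.coeff (e i))) (μ (e i)))
  refine ⟨u, _, fun i => p.coeff (e i), fun i => e i, fun i => μ (e i),
    fun i => MvPolynomial.mem_support_iff.mp (e i).2, Subtype.val_injective.comp e.injective,
    fun i => hμ _, hu, ?_⟩
  rw [e.sum_comp fun m => MvPolynomial.monomial (m : ℕ →₀ ℕ) (p.coeff m),
    Finset.sum_coe_sort p.support fun m => MvPolynomial.monomial m (p.coeff m)]
  exact (MvPolynomial.support_sum_monomial_coeff p).symm

end StandardTerms

end RingTerm

open RingTerm in
/-- every ring term is f-equivalent to a standard ring term. -/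
theorem exists_standard_feq {R : Type*} [CommRing R] (t : RingTerm R) :
    ∃ (u : RingTerm R) (p : MvPolynomial ℕ R),
      IsStandardWithCarrier u p ∧ FEq t u := by
  obtain ⟨u, hu⟩ := exists_isStandardWithCarrier (psi t)
  exact ⟨u, psi t, hu, feq_of_psi_eq hu.psi_eq.symm⟩
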